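/- Let t₁, t₂, u, s₁, s₂ ∈ ℂ with Re(s₁ + u) > 0, Re(s₂ + t₁ + u + 1/2) > 0, and Re(s₂ + t₂ + u + 1/2) > 0. Then the triple integral ∫_{ℝˣ}∫_{ℝˣ}∫_{ℝˣ} |g₁|^{s₂−s₁+t₁+1/2} · |g₂|^{s₁+u} · |c|^{t₂−t₁} · exp(−π c² − π g₁²/c² − π g₂²/g₁²) d×c d×g₂ d×g₁ converges absolutely and equals ζ_ℝ(s₁ + u) · ζ_ℝ(s₂ + t₁ + u + 1/2) · ζ_ℝ(s₂ + t₂ + u + 1/2). (This is the case n = 2, F = ℝ of the paper's theorem on the modified GL_n × GL_{n−1} Rankin–Selberg integral of Sakellaridis, made fully explicit for π = |·|^{t₁} ⊞ |·|^{t₂} spherical on GL₂(ℝ) and σ = |·|^u on GL₁(ℝ) via the paper's propagation formula for the spherical Whittaker function; the integral evaluates to L(s₂ + 1/2, π × σ)·L(s₁, σ), and this result is new in the paper even in the unramified case.) -/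

import Mathlib

open MeasureTheory

/-- The real zeta factor `ζ_ℝ(s) = π^{-s/2} Γ(s/2)`. -/
noncomputable def zetaR (s : ℂ) : ℂ :=
  (Real.pi : ℂ) ^ (-s / 2) * Complex.Gamma (s / 2)

/-- The complex zeta factor `ζ_ℂ(s) = 2 (2π)^{-s} Γ(s)`. -/
noncomputable def zetaC (s : ℂ) : ℂ :=
  2 * (2 * (Real.pi : ℂ)) ^ (-s) * Complex.Gamma s

/-- The multiplicative Haar measure `d×x = dx/|x|` on `ℝˣ = ℝ ∖ {0}`. -/
noncomputable def mulHaarR : Measure ℝ :=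
  volume.withDensity fun x => ENNReal.ofReal (1 / |x|)

/-- The multiplicative Haar measure `d×z = (2/π) dA(z)/|z|²` on `ℂˣ`. -/
noncomputable def mulHaarC : Measure ℂ :=
  volume.withDensity fun z => ENNReal.ofReal (2 / (Real.pi * ‖z‖ ^ 2))

/-- The complex power `|x|^w = exp(w log |x|)` for `x ∈ ℝ`. -/
noncomputable def cpowR (x : ℝ) (w : ℂ) : ℂ :=
  Complex.exp (w * (Real.log |x| : ℂ))

/-- The complex power `|z|_ℂ^w = exp(w log |z|²)` for `z ∈ ℂ`. -/
noncomputable def cpowC (z : ℂ) (w : ℂ) : ℂ :=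
  Complex.exp (w * (Real.log (‖z‖ ^ 2) : ℂ))

/-- The integrand of the `n = 2`, `F = ℝ` modified `GL_n × GL_{n-1}` Rankin–Selberg
integral of Sakellaridis, in the variables `p = (g₁, g₂, c)`:
`|g₁|^{s₂-s₁+t₁+1/2} |g₂|^{s₁+u} |c|^{t₂-t₁} exp(-π c² - π g₁²/c² - π g₂²/g₁²)`. -/
noncomputable def sakIntegrandR2 (s₁ s₂ t₁ t₂ u : ℂ) (p : ℝ × ℝ × ℝ) : ℂ :=
  cpowR p.1 (s₂ - s₁ + t₁ + 1 / 2) * cpowR p.2.1 (s₁ + u) * cpowR p.2.2 (t₂ - t₁) *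
    (Real.exp (-Real.pi * p.2.2 ^ 2 - Real.pi * (p.1 ^ 2 / p.2.2 ^ 2)
      - Real.pi * (p.2.1 ^ 2 / p.1 ^ 2)) : ℂ)

/-! The substitution `g₁ = y c`, `g₂ = x g₁` preserves `d×c d×g₂ d×g₁`, since `d×x` is invariant
under `x ↦ x a`, and it separates the variables: the integrand becomes
`|y|^{s₂+t₁+u+1/2} e^{-πy²} · |x|^{s₁+u} e^{-πx²} · |c|^{s₂+t₂+u+1/2} e^{-πc²}`.
By Fubini the integral is the product of three Tate integrals `∫ |x|^w e^{-πx²} d×x`, and each of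
these is twice the Mellin transform of `e^{-πt²}`, i.e. `ζ_ℝ(w)`. -/

open Set Real

local notation "μ³" => mulHaarR.prod (mulHaarR.prod mulHaarR)

instance : SigmaFinite mulHaarR :=
  SigmaFinite.withDensity_ofReal _

lemma mulHaarR_zero : mulHaarR {0} = 0 :=
  withDensity_absolutelyContinuous _ _ (by simp)

lemma ae_ne_zero_mulHaarR : ∀ᵐ x ∂mulHaarR, x ≠ 0 :=
  measure_eq_zero_iff_ae_notMem.mp mulHaarR_zero

lemma measurePreserving_mul_right_mulHaarR {a : ℝ} (ha : a ≠ 0) :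
    MeasurePreserving (· * a) mulHaarR mulHaarR := by
  refine ⟨measurable_mul_const a, Measure.ext_of_lintegral _ fun f hf => ?_⟩
  have hdens : Measurable fun x : ℝ => ENNReal.ofReal (1 / |x|) := by fun_prop
  have hscale : ∀ x : ℝ, ENNReal.ofReal |a| * ENNReal.ofReal (1 / |x * a|)
      = ENNReal.ofReal (1 / |x|) := fun x => by
    rw [← ENNReal.ofReal_mul (abs_nonneg a), abs_mul]
    rcases eq_or_ne x 0 with rfl | hx
    · simp
    · congr 1; field_simp
  rw [lintegral_map hf (measurable_mul_const a), mulHaarR,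
    lintegral_withDensity_eq_lintegral_mul _ hdens (by fun_prop : Measurable fun x => f (x * a)),
    lintegral_withDensity_eq_lintegral_mul _ hdens hf]
  conv_rhs => rw [← Real.smul_map_volume_mul_right ha]
  rw [lintegral_smul_measure, lintegral_map (hdens.mul hf) (measurable_mul_const a), smul_eq_mul,
    ← lintegral_const_mul _ (by fun_prop)]
  simp only [Pi.mul_apply, ← mul_assoc, hscale]

section

variable {E : Type*} [NormedAddCommGroup E]

lemma integrable_mulHaarR_iff [NormedSpace ℝ E] {f : ℝ → E} :
    Integrable f mulHaarR ↔ Integrable (fun x => |x|⁻¹ • f x) := by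
  rw [mulHaarR, integrable_withDensity_iff_integrable_smul' (by fun_prop) (by simp)]
  simp [ENNReal.toReal_ofReal]

lemma integral_mulHaarR [NormedSpace ℝ E] (f : ℝ → E) :
    ∫ x, f x ∂mulHaarR = ∫ x, |x|⁻¹ • f x := by
  rw [mulHaarR, integral_withDensity_eq_integral_toReal_smul (by fun_prop) (by simp)]
  simp [ENNReal.toReal_ofReal]

lemma comp_abs_ae_eq_indicator_add (f : ℝ → E) :
    (fun x => f |x|) =ᵐ[volume] fun x => (Ioi 0).indicator f x + (Ioi 0).indicator f (-x) := by
  filter_upwards [measure_eq_zero_iff_ae_notMem.mp (measure_singleton (0 : ℝ))] with x hx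
  rcases lt_or_gt_of_ne (show x ≠ 0 from hx) with hneg | hpos
  · simp [hneg, hneg.not_gt, abs_of_neg hneg]
  · simp [hpos, hpos.not_gt, abs_of_pos hpos]

lemma integrable_comp_abs {f : ℝ → E} (hf : IntegrableOn f (Ioi 0)) :
    Integrable fun x => f |x| := by
  have hg := hf.integrable_indicator measurableSet_Ioi
  exact (hg.add hg.comp_neg).congr (comp_abs_ae_eq_indicator_add f).symm

lemma integral_comp_abs_of_integrableOn [NormedSpace ℝ E] {f : ℝ → E}
    (hf : IntegrableOn f (Ioi 0)) : ∫ x, f |x| = (2 : ℝ) • ∫ x in Ioi 0, f x := by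
  have hg := hf.integrable_indicator measurableSet_Ioi
  rw [integral_congr_ae (comp_abs_ae_eq_indicator_add f), integral_add hg hg.comp_neg,
    integral_neg_eq_self, integral_indicator measurableSet_Ioi, two_smul]

end

@[fun_prop]
lemma measurable_cpowR (w : ℂ) : Measurable fun x : ℝ => cpowR x w := by
  unfold cpowR; fun_prop

lemma cpowR_mul {x y : ℝ} (hx : x ≠ 0) (hy : y ≠ 0) (w : ℂ) :
    cpowR (x * y) w = cpowR x w * cpowR y w := by
  rw [cpowR, abs_mul, Real.log_mul (abs_ne_zero.mpr hx) (abs_ne_zero.mpr hy), Complex.ofReal_add,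
    mul_add, Complex.exp_add]; rfl

@[simp]
lemma cpowR_abs (x : ℝ) (w : ℂ) : cpowR |x| w = cpowR x w := by
  rw [cpowR, abs_abs]; rfl

lemma cpowR_of_pos {x : ℝ} (hx : 0 < x) (w : ℂ) : cpowR x w = (x : ℂ) ^ w := by
  rw [cpowR, abs_of_pos hx, Complex.cpow_def_of_ne_zero (by exact_mod_cast hx.ne'),
    ← Complex.ofReal_log hx.le, mul_comm]

lemma cpow_sub_one_smul_eq_inv_smul_cpowR_mul {g : ℝ → ℂ} (s : ℂ) {t : ℝ} (ht : 0 < t) :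
    (t : ℂ) ^ (s - 1) • g t = t⁻¹ • (cpowR t s * g t) := by
  have ht' : (t : ℂ) ≠ 0 := by exact_mod_cast ht.ne'
  rw [cpowR_of_pos ht, Complex.cpow_sub _ _ ht', Complex.cpow_one, Complex.real_smul,
    smul_eq_mul, Complex.ofReal_inv]
  field_simp

lemma MellinConvergent.integrableOn_inv_smul_cpowR_mul {g : ℝ → ℂ} {s : ℂ}
    (hg : MellinConvergent g s) : IntegrableOn (fun t : ℝ => t⁻¹ • (cpowR t s * g t)) (Ioi 0) :=
  hg.congr_fun (fun _ ht => cpow_sub_one_smul_eq_inv_smul_cpowR_mul s ht) measurableSet_Ioi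

lemma MellinConvergent.integrable_cpowR_mul_comp_abs {g : ℝ → ℂ} {s : ℂ}
    (hg : MellinConvergent g s) : Integrable (fun x => cpowR x s * g |x|) mulHaarR := by
  rw [integrable_mulHaarR_iff]
  simpa only [cpowR_abs] using integrable_comp_abs hg.integrableOn_inv_smul_cpowR_mul

lemma integral_cpowR_mul_comp_abs {g : ℝ → ℂ} {s : ℂ} (hg : MellinConvergent g s) :
    ∫ x, cpowR x s * g |x| ∂mulHaarR = 2 * mellin g s := by
  have heven := integral_comp_abs_of_integrableOn hg.integrableOn_inv_smul_cpowR_mul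
  simp only [cpowR_abs] at heven
  rw [integral_mulHaarR, heven, mellin,
    setIntegral_congr_fun measurableSet_Ioi fun _ ht =>
      cpow_sub_one_smul_eq_inv_smul_cpowR_mul s ht,
    Complex.real_smul, Complex.ofReal_ofNat]

lemma hasMellin_exp_neg {s : ℂ} (hs : 0 < s.re) :
    HasMellin (fun t : ℝ => (rexp (-t) : ℂ)) s (Complex.Gamma s) := by
  refine ⟨?_, by rw [← Complex.GammaIntegral_eq_mellin, Complex.Gamma_eq_integral hs]⟩
  simpa only [MellinConvergent, smul_eq_mul, mul_comm] using Complex.GammaIntegral_convergent hs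

lemma hasMellin_exp_neg_pi_mul_sq {w : ℂ} (hw : 0 < w.re) :
    HasMellin (fun t : ℝ => (rexp (-π * t ^ 2) : ℂ)) w (zetaR w / 2) := by
  obtain ⟨hconv, hval⟩ := hasMellin_exp_neg (show 0 < (w / 2).re by simpa using hw)
  have hgauss : (fun t : ℝ => (rexp (-π * t ^ 2) : ℂ))
      = fun t => (fun u => (rexp (-u) : ℂ)) (π * t ^ (2 : ℝ)) := by
    ext t; rw [rpow_two, neg_mul]
  have hcast : (((2 : ℝ) : ℂ)) = 2 := by norm_num
  rw [hgauss]
  constructor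
  · exact (MellinConvergent.comp_rpow (f := fun u => (rexp (-(π * u)) : ℂ)) two_ne_zero).mpr
      (hcast ▸ (MellinConvergent.comp_mul_left pi_pos).mpr hconv)
  · rw [mellin_comp_rpow (fun u => (rexp (-(π * u)) : ℂ)), hcast,
      mellin_comp_mul_left (fun u => (rexp (-u) : ℂ)) _ pi_pos, hval, zetaR]
    simp only [abs_two, Complex.real_smul, smul_eq_mul]
    push_cast
    ring_nf

noncomputable def tateGaussian (w : ℂ) (x : ℝ) : ℂ :=
  cpowR x w * (rexp (-π * x ^ 2) : ℂ)

lemma tateGaussian_eq_cpowR_mul_comp_abs (w : ℂ) :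
    tateGaussian w = fun x => cpowR x w * (fun t : ℝ => (rexp (-π * t ^ 2) : ℂ)) |x| := by
  ext x; simp only [tateGaussian, sq_abs]

lemma integrable_tateGaussian {w : ℂ} (hw : 0 < w.re) : Integrable (tateGaussian w) mulHaarR := by
  rw [tateGaussian_eq_cpowR_mul_comp_abs]
  exact (hasMellin_exp_neg_pi_mul_sq hw).1.integrable_cpowR_mul_comp_abs

lemma integral_tateGaussian {w : ℂ} (hw : 0 < w.re) :
    ∫ x, tateGaussian w x ∂mulHaarR = zetaR w := by
  obtain ⟨hconv, hval⟩ := hasMellin_exp_neg_pi_mul_sq hw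
  rw [tateGaussian_eq_cpowR_mul_comp_abs, integral_cpowR_mul_comp_abs hconv, hval]
  ring

lemma measurePreserving_scale_snd_by_fst :
    MeasurePreserving (fun p : ℝ × ℝ × ℝ => (p.1, p.2.1 * p.1, p.2.2)) μ³ μ³ :=
  (MeasurePreserving.id mulHaarR).skew_product
    (g := fun (a : ℝ) (q : ℝ × ℝ) => (q.1 * a, q.2)) (by fun_prop) <|
    ae_ne_zero_mulHaarR.mono fun _ ha =>
      ((measurePreserving_mul_right_mulHaarR ha).prod (MeasurePreserving.id mulHaarR)).map_eq

lemma measurePreserving_scale_fst_by_third :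
    MeasurePreserving (fun p : ℝ × ℝ × ℝ => (p.1 * p.2.2, p.2)) μ³ μ³ := by
  have hskew : MeasurePreserving (fun p : (ℝ × ℝ) × ℝ => (p.1, p.2 * p.1.2))
      ((mulHaarR.prod mulHaarR).prod mulHaarR) ((mulHaarR.prod mulHaarR).prod mulHaarR) :=
    (MeasurePreserving.id _).skew_product (g := fun (q : ℝ × ℝ) (y : ℝ) => y * q.2)
      (by fun_prop) <|
      (Measure.quasiMeasurePreserving_snd.ae ae_ne_zero_mulHaarR).mono fun _ hq =>
        (measurePreserving_mul_right_mulHaarR hq).map_eq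
  exact Measure.measurePreserving_swap.comp (hskew.comp Measure.measurePreserving_swap)

lemma measurable_sakIntegrandR2 (s₁ s₂ t₁ t₂ u : ℂ) :
    Measurable (sakIntegrandR2 s₁ s₂ t₁ t₂ u) := by
  unfold sakIntegrandR2; fun_prop

lemma sakIntegrandR2_mul_mul (s₁ s₂ t₁ t₂ u : ℂ) {y x c : ℝ} (hy : y ≠ 0) (hx : x ≠ 0)
    (hc : c ≠ 0) :
    sakIntegrandR2 s₁ s₂ t₁ t₂ u (y * c, x * (y * c), c) = tateGaussian (s₂ + t₁ + u + 1 / 2) y *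
      (tateGaussian (s₁ + u) x * tateGaussian (s₂ + t₂ + u + 1 / 2) c) := by
  have hyc : y * c ≠ 0 := mul_ne_zero hy hc
  have hgy : (y * c) ^ 2 / c ^ 2 = y ^ 2 := by field_simp
  have hgx : (x * (y * c)) ^ 2 / (y * c) ^ 2 = x ^ 2 := by field_simp
  rw [sakIntegrandR2, hgy, hgx, cpowR_mul hy hc, cpowR_mul hx hyc, cpowR_mul hy hc]
  simp only [tateGaussian, cpowR, Complex.ofReal_exp, ← Complex.exp_add]
  congr 1
  push_cast
  ring

/-- For `Re(s₁ + u) > 0`, `Re(s₂ + t₁ + u + 1/2) > 0`, `Re(s₂ + t₂ + u + 1/2) > 0`, the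
triple integral `∫∫∫ |g₁|^{s₂-s₁+t₁+1/2} |g₂|^{s₁+u} |c|^{t₂-t₁}
  e^{-π c² - π g₁²/c² - π g₂²/g₁²} d×c d×g₂ d×g₁` converges absolutely and equals
`ζ_ℝ(s₁+u) ζ_ℝ(s₂+t₁+u+1/2) ζ_ℝ(s₂+t₂+u+1/2)`. -/
theorem stmt_12 (t₁ t₂ u s₁ s₂ : ℂ) (h₁ : 0 < (s₁ + u).re)
    (h₂ : 0 < (s₂ + t₁ + u + 1 / 2).re) (h₃ : 0 < (s₂ + t₂ + u + 1 / 2).re) :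
    Integrable (sakIntegrandR2 s₁ s₂ t₁ t₂ u) (mulHaarR.prod (mulHaarR.prod mulHaarR)) ∧
      ∫ p : ℝ × ℝ × ℝ, sakIntegrandR2 s₁ s₂ t₁ t₂ u p
          ∂(mulHaarR.prod (mulHaarR.prod mulHaarR)) =
        zetaR (s₁ + u) * zetaR (s₂ + t₁ + u + 1 / 2) * zetaR (s₂ + t₂ + u + 1 / 2) := by
  set T := fun q : ℝ × ℝ × ℝ => (q.1 * q.2.2, q.2.1 * (q.1 * q.2.2), q.2.2)
  set G : ℝ × ℝ × ℝ → ℂ := fun q => tateGaussian (s₂ + t₁ + u + 1 / 2) q.1 *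
    (tateGaussian (s₁ + u) q.2.1 * tateGaussian (s₂ + t₂ + u + 1 / 2) q.2.2)
  have hT : MeasurePreserving T μ³ μ³ :=
    measurePreserving_scale_snd_by_fst.comp measurePreserving_scale_fst_by_third
  have hFT : sakIntegrandR2 s₁ s₂ t₁ t₂ u ∘ T =ᵐ[μ³] G := by
    filter_upwards [Measure.quasiMeasurePreserving_fst.ae ae_ne_zero_mulHaarR,
      (Measure.quasiMeasurePreserving_fst.comp Measure.quasiMeasurePreserving_snd).ae
        ae_ne_zero_mulHaarR,
      (Measure.quasiMeasurePreserving_snd.comp Measure.quasiMeasurePreserving_snd).ae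
        ae_ne_zero_mulHaarR] with q hy hx hc
    exact sakIntegrandR2_mul_mul s₁ s₂ t₁ t₂ u hy hx hc
  have hF : AEStronglyMeasurable (sakIntegrandR2 s₁ s₂ t₁ t₂ u) μ³ :=
    (measurable_sakIntegrandR2 s₁ s₂ t₁ t₂ u).aestronglyMeasurable
  have hG : Integrable G μ³ := (integrable_tateGaussian h₂).mul_prod
    ((integrable_tateGaussian h₁).mul_prod (integrable_tateGaussian h₃))
  refine ⟨(hT.integrable_comp hF).mp (hG.congr hFT.symm), ?_⟩
  calc ∫ p, sakIntegrandR2 s₁ s₂ t₁ t₂ u p ∂μ³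
      = ∫ p, sakIntegrandR2 s₁ s₂ t₁ t₂ u p ∂(μ³.map T) := by rw [hT.map_eq]
    _ = ∫ q, G q ∂μ³ :=
        (integral_map hT.aemeasurable (by rwa [hT.map_eq])).trans (integral_congr_ae hFT)
    _ = zetaR (s₁ + u) * zetaR (s₂ + t₁ + u + 1 / 2) * zetaR (s₂ + t₂ + u + 1 / 2) := by
        rw [integral_prod_mul (tateGaussian _)
            fun r : ℝ × ℝ => tateGaussian (s₁ + u) r.1 * tateGaussian (s₂ + t₂ + u + 1 / 2) r.2,
          integral_prod_mul, integral_tateGaussian h₁, integral_tateGaussian h₂,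
          integral_tateGaussian h₃]
        ring
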